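/- Let $Y_1,\dots,Y_M$ be i.i.d. random variables taking values in $[e^{-1}, e]$ (e.g., $Y_i = \exp(u^\top v_i)$ with $\|u\|\le 1, \|v_i\|\le 1$). Then $\left|\mathbb{E}\log\left(\frac{1}{M}\sum_{i=1}^M Y_i\right) - \log \mathbb{E} Y_1\right| \le \frac{e}{\sqrt{M}}$. -/

import Mathlib

/-! For the sample mean `S`, Jensen gives `𝔼 log S ≤ log 𝔼 S`. Conversely, for `x, b ≥ a > 0` the
logarithm lies above the parabola `log b + (x - b) / b - (x - b)² / (2ab)` (for `x ≥ b` by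
`log (1 + s) ≥ 2s / (s + 2)`, for `x ≤ b` by `u ≤ sinh u`), so integrating at `b = 𝔼 S` gives
`log 𝔼 S - 𝔼 log S ≤ Var S / (2a 𝔼 S)`. Take `a = e⁻¹`: independence gives `Var S = Var Y₁ / M`,
and the Bhatia–Davis inequality `Var Y₁ ≤ (e - 𝔼 Y₁)(𝔼 Y₁ - e⁻¹) ≤ (e + e⁻¹ - 2) 𝔼 Y₁` bounds the
deviation by `e (e + e⁻¹ - 2) / (2M) ≤ e / M ≤ e / √M`. -/

open MeasureTheory ProbabilityTheory Real

namespace Real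

theorem sub_one_sub_sq_div_le_log {t : ℝ} (ht : 0 < t) :
    (t - 1) - (t - 1) ^ 2 / (2 * min t 1) ≤ log t := by
  rcases le_total 1 t with h1 | h1
  · have hpade := le_log_one_add_of_nonneg (sub_nonneg.2 h1)
    rw [add_sub_cancel] at hpade
    rw [min_eq_right h1]
    refine le_trans ?_ hpade
    rw [le_div_iff₀ (by linarith)]
    nlinarith [pow_two_nonneg (t - 1), mul_nonneg (sub_nonneg.2 h1) (pow_two_nonneg (t - 1))]
  · have hsinh := self_le_sinh_iff.2 (log_nonneg (one_le_inv_iff₀.2 ⟨ht, h1⟩))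
    rw [sinh_log (inv_pos.2 ht), inv_inv, log_inv] at hsinh
    have hquad : (t - 1) - (t - 1) ^ 2 / (2 * t) = (t - t⁻¹) / 2 := by field_simp; ring
    rw [min_eq_left h1, hquad]
    linarith

theorem sub_div_sub_sq_div_le_log_sub_log {a x b : ℝ} (ha : 0 < a) (hax : a ≤ x) (hab : a ≤ b) :
    (x - b) / b - (x - b) ^ 2 / (2 * a * b) ≤ log x - log b := by
  have hb : 0 < b := ha.trans_le hab
  have hmin : a / b ≤ min (x / b) 1 :=
    le_min (div_le_div_of_nonneg_right hax hb.le) ((div_le_one hb).2 hab)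
  have hsq : (x / b - 1) ^ 2 / (2 * min (x / b) 1) ≤ (x - b) ^ 2 / (2 * a * b) := by
    calc (x / b - 1) ^ 2 / (2 * min (x / b) 1) ≤ (x / b - 1) ^ 2 / (2 * (a / b)) := by
          gcongr
      _ = (x - b) ^ 2 / (2 * a * b) := by field_simp
  rw [← log_div (ha.trans_le hax).ne' hb.ne']
  calc (x - b) / b - (x - b) ^ 2 / (2 * a * b)
      ≤ (x / b - 1) - (x / b - 1) ^ 2 / (2 * min (x / b) 1) := by
        rw [sub_div, div_self hb.ne']; linarith
    _ ≤ log (x / b) := sub_one_sub_sq_div_le_log (div_pos (ha.trans_le hax) hb)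

theorem exp_one_add_inv_le_four : exp 1 + (exp 1)⁻¹ ≤ 4 := by
  have : (exp 1)⁻¹ ≤ 1 := inv_le_one_of_one_le₀ (one_le_exp zero_le_one)
  linarith [exp_one_lt_d9]

end Real

section LogIntegral

variable {Ω : Type*} {m : MeasurableSpace Ω} {μ : Measure Ω} [IsProbabilityMeasure μ]
  {X : Ω → ℝ} {a : ℝ}

theorem MeasureTheory.Integrable.log_of_ae_le (hX : Integrable X μ) (ha : 0 < a)
    (hXa : ∀ᵐ ω ∂μ, a ≤ X ω) :
    Integrable (fun ω ↦ log (X ω)) μ := by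
  refine ((integrable_const |log a|).add hX).mono'
    (measurable_log.comp_aemeasurable hX.aemeasurable).aestronglyMeasurable ?_
  filter_upwards [hXa] with ω hω
  have hX0 : 0 ≤ X ω := ha.le.trans hω
  rw [Real.norm_eq_abs, Pi.add_apply, abs_le]
  constructor
  · linarith [log_le_log ha hω, neg_abs_le (log a)]
  · linarith [log_le_self hX0, abs_nonneg (log a)]

theorem const_le_integral (hX : Integrable X μ) (hXa : ∀ᵐ ω ∂μ, a ≤ X ω) : a ≤ μ[X] := by
  simpa using integral_mono_ae (integrable_const a) hX hXa

theorem integral_log_le_log_integral (hX : Integrable X μ) (ha : 0 < a)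
    (hXa : ∀ᵐ ω ∂μ, a ≤ X ω) : ∫ ω, log (X ω) ∂μ ≤ log μ[X] := by
  have hb : 0 < μ[X] := ha.trans_le (const_le_integral hX hXa)
  have hlog := hX.log_of_ae_le ha hXa
  have htangent : ∫ ω, (log (X ω) - log μ[X]) ∂μ ≤ ∫ ω, (X ω - μ[X]) / μ[X] ∂μ := by
    refine integral_mono_ae (hlog.sub (integrable_const _))
      ((hX.sub (integrable_const _)).div_const _) ?_
    filter_upwards [hXa] with ω hω
    have := log_le_sub_one_of_pos (div_pos (ha.trans_le hω) hb)
    rw [log_div (ha.trans_le hω).ne' hb.ne'] at this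
    rwa [sub_div, div_self hb.ne']
  rw [integral_sub hlog (integrable_const _), integral_div,
    integral_sub hX (integrable_const _)] at htangent
  simpa using htangent

theorem log_integral_sub_integral_log_le (hX : MemLp X 2 μ) (ha : 0 < a)
    (hXa : ∀ᵐ ω ∂μ, a ≤ X ω) :
    log μ[X] - ∫ ω, log (X ω) ∂μ ≤ Var[X; μ] / (2 * a * μ[X]) := by
  have hX1 := hX.integrable one_le_two
  have hab := const_le_integral hX1 hXa
  have hlog := hX1.log_of_ae_le ha hXa
  have hsq : Integrable (fun ω ↦ (X ω - μ[X]) ^ 2) μ :=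
    (hX.sub (memLp_const μ[X])).integrable_sq
  have hcent : Integrable (fun ω ↦ (X ω - μ[X]) / μ[X]) μ :=
    (hX1.sub (integrable_const _)).div_const _
  have hquad : ∫ ω, ((X ω - μ[X]) / μ[X] - (X ω - μ[X]) ^ 2 / (2 * a * μ[X])) ∂μ
      ≤ ∫ ω, (log (X ω) - log μ[X]) ∂μ :=
    integral_mono_ae (hcent.sub (hsq.div_const _))
      (hlog.sub (integrable_const _))
      (by filter_upwards [hXa] with ω hω using sub_div_sub_sq_div_le_log_sub_log ha hω hab)
  have hlin : ∫ ω, (X ω - μ[X]) / μ[X] ∂μ = 0 := by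
    rw [integral_div, integral_sub hX1 (integrable_const _)]
    simp
  have hvar : ∫ ω, (X ω - μ[X]) ^ 2 / (2 * a * μ[X]) ∂μ = Var[X; μ] / (2 * a * μ[X]) := by
    rw [integral_div, variance_eq_integral hX.aemeasurable]
  rw [integral_sub hcent (hsq.div_const _), hlin, hvar,
    integral_sub hlog (integrable_const _)] at hquad
  simp only [integral_const, probReal_univ, one_smul] at hquad
  linarith

theorem abs_integral_log_sub_log_integral_le (hX : MemLp X 2 μ) (ha : 0 < a)
    (hXa : ∀ᵐ ω ∂μ, a ≤ X ω) :
    |∫ ω, log (X ω) ∂μ - log μ[X]| ≤ Var[X; μ] / (2 * a * μ[X]) := by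
  rw [abs_sub_le_iff]
  refine ⟨?_, log_integral_sub_integral_log_le hX ha hXa⟩
  have hpos : 0 ≤ Var[X; μ] / (2 * a * μ[X]) := by
    have := ha.trans_le (const_le_integral (hX.integrable one_le_two) hXa)
    exact div_nonneg (variance_nonneg _ _) (by positivity)
  linarith [integral_log_le_log_integral (hX.integrable one_le_two) ha hXa]

end LogIntegral

section SampleMean

variable {Ω ι : Type*} {m : MeasurableSpace Ω} {μ : Measure Ω} [Fintype ι]
  {Y : ι → Ω → ℝ}

noncomputable def sampleMean (Y : ι → Ω → ℝ) (ω : Ω) : ℝ :=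
  (Fintype.card ι : ℝ)⁻¹ * ∑ i, Y i ω

theorem sampleMean_mem_Icc [Nonempty ι] {a b : ℝ} {ω : Ω} (hY : ∀ i, Y i ω ∈ Set.Icc a b) :
    sampleMean Y ω ∈ Set.Icc a b := by
  have hcard : (0 : ℝ) < Fintype.card ι := Nat.cast_pos.2 Fintype.card_pos
  rw [sampleMean, ← div_eq_inv_mul, Set.mem_Icc, le_div_iff₀ hcard, div_le_iff₀ hcard]
  constructor
  · simpa [mul_comm] using Finset.card_nsmul_le_sum Finset.univ (Y · ω) a fun i _ ↦ (hY i).1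
  · simpa [mul_comm] using Finset.sum_le_card_nsmul Finset.univ (Y · ω) b fun i _ ↦ (hY i).2

theorem aemeasurable_sampleMean (hY : ∀ i, AEMeasurable (Y i) μ) :
    AEMeasurable (sampleMean Y) μ :=
  aemeasurable_const.mul (Finset.aemeasurable_fun_sum _ fun i _ ↦ hY i)

theorem integral_sampleMean [Nonempty ι] {c : ℝ} (hY : ∀ i, Integrable (Y i) μ)
    (hmean : ∀ i, μ[Y i] = c) : μ[sampleMean Y] = c := by
  unfold sampleMean
  rw [integral_const_mul, integral_finsetSum _ fun i _ ↦ hY i]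
  simp [hmean]

theorem variance_sampleMean {v : ℝ} (hindep : iIndepFun Y μ) (hY : ∀ i, MemLp (Y i) 2 μ)
    (hvar : ∀ i, Var[Y i; μ] = v) : Var[sampleMean Y; μ] = v / Fintype.card ι := by
  have hsum : Var[∑ i, Y i; μ] = Fintype.card ι * v := by
    rw [IndepFun.variance_sum (fun i _ ↦ hY i) fun i _ j _ hij ↦ hindep.indepFun hij]
    simp [hvar]
  calc Var[sampleMean Y; μ] = Var[fun ω ↦ (Fintype.card ι : ℝ)⁻¹ * (∑ i, Y i) ω; μ] := by
        unfold sampleMean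
        simp only [Finset.sum_apply]
    _ = v / Fintype.card ι := by
      rw [variance_const_mul, hsum]
      rcases eq_or_ne (Fintype.card ι : ℝ) 0 with hcard | hcard
      · simp [hcard]
      · field_simp

end SampleMean

theorem variance_le_mul_integral_of_mem_Icc_inv {Ω : Type*} {m : MeasurableSpace Ω}
    {μ : Measure Ω} [IsProbabilityMeasure μ] {X : Ω → ℝ} {c : ℝ} (hc : 0 < c)
    (hX : AEMeasurable X μ) (h : ∀ᵐ ω ∂μ, X ω ∈ Set.Icc c⁻¹ c) :
    Var[X; μ] ≤ (c + c⁻¹ - 2) * μ[X] := by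
  refine (variance_le_sub_mul_sub h hX).trans ?_
  nlinarith [sq_nonneg (μ[X] - 1), mul_inv_cancel₀ hc.ne']

theorem abs_integral_log_sampleMean_sub_log_integral_le {Ω ι : Type*} {m : MeasurableSpace Ω}
    {μ : Measure Ω} [IsProbabilityMeasure μ] [Fintype ι] {Y : ι → Ω → ℝ} {c : ℝ} {j : ι}
    (hc : 0 < c) (hbdd : ∀ i, ∀ᵐ ω ∂μ, Y i ω ∈ Set.Icc c⁻¹ c) (hindep : iIndepFun Y μ)
    (hident : ∀ i, IdentDistrib (Y i) (Y j) μ μ) :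
    |∫ ω, log (sampleMean Y ω) ∂μ - log μ[Y j]| ≤ c * (c + c⁻¹ - 2) / (2 * Fintype.card ι) := by
  have : Nonempty ι := ⟨j⟩
  have hY : ∀ i, MemLp (Y i) 2 μ := fun i ↦
    memLp_of_bounded (hbdd i) (hident i).aemeasurable_fst.aestronglyMeasurable 2
  have hS_mem : ∀ᵐ ω ∂μ, sampleMean Y ω ∈ Set.Icc c⁻¹ c := by
    filter_upwards [ae_all_iff.2 hbdd] with ω hω using sampleMean_mem_Icc hω
  have hS : MemLp (sampleMean Y) 2 μ :=
    memLp_of_bounded hS_mem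
      (aemeasurable_sampleMean fun i ↦ (hident i).aemeasurable_fst).aestronglyMeasurable 2
  have hmean : μ[sampleMean Y] = μ[Y j] :=
    integral_sampleMean (fun i ↦ (hY i).integrable one_le_two) fun i ↦ (hident i).integral_eq
  have hvar : Var[sampleMean Y; μ] = Var[Y j; μ] / Fintype.card ι :=
    variance_sampleMean hindep hY fun i ↦ (hident i).variance_eq
  have hpos : 0 < μ[Y j] :=
    (inv_pos.2 hc).trans_le (const_le_integral ((hY j).integrable one_le_two)
      ((hbdd j).mono fun ω hω ↦ hω.1))
  calc |∫ ω, log (sampleMean Y ω) ∂μ - log μ[Y j]|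
        = |∫ ω, log (sampleMean Y ω) ∂μ - log μ[sampleMean Y]| := by rw [hmean]
    _ ≤ Var[sampleMean Y; μ] / (2 * c⁻¹ * μ[sampleMean Y]) :=
      abs_integral_log_sub_log_integral_le hS (inv_pos.2 hc) (hS_mem.mono fun ω hω ↦ hω.1)
    _ = c * (Var[Y j; μ] / μ[Y j]) / (2 * Fintype.card ι) := by
      rw [hvar, hmean]
      field_simp
    _ ≤ c * (c + c⁻¹ - 2) / (2 * Fintype.card ι) := by
      gcongr
      exact (div_le_iff₀ hpos).2
        (variance_le_mul_integral_of_mem_Icc_inv hc (hident j).aemeasurable_fst (hbdd j))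

/-- If `Y₁, …, Y_M` are i.i.d. random variables with values in `[e⁻¹, e]`, then
`|𝔼 log (M⁻¹ ∑ᵢ Yᵢ) - log 𝔼 Y₁| ≤ e / √M`. -/
theorem iid_log_mean_deviation
    {Ω : Type*} [MeasureSpace Ω] [IsProbabilityMeasure (ℙ : Measure Ω)]
    (M : ℕ) (hM : 0 < M) (Y : Fin M → Ω → ℝ)
    (hmeas : ∀ i, Measurable (Y i))
    (hbdd : ∀ i, ∀ ω, Y i ω ∈ Set.Icc (Real.exp 1)⁻¹ (Real.exp 1))
    (hindep : iIndepFun Y ℙ)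
    (hident : ∀ i, (ℙ : Measure Ω).map (Y i) = (ℙ : Measure Ω).map (Y ⟨0, hM⟩)) :
    |(∫ ω, Real.log ((M : ℝ)⁻¹ * ∑ i, Y i ω)) - Real.log (∫ ω, Y ⟨0, hM⟩ ω)|
      ≤ Real.exp 1 / Real.sqrt M := by
  have hdev := abs_integral_log_sampleMean_sub_log_integral_le (exp_pos 1)
    (fun i ↦ ae_of_all _ (hbdd i)) hindep
    fun i ↦ ⟨(hmeas i).aemeasurable, (hmeas _).aemeasurable, hident i⟩
  simp only [sampleMean, Fintype.card_fin] at hdev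
  have hM' : (0 : ℝ) < M := Nat.cast_pos.2 hM
  calc _ ≤ exp 1 * (exp 1 + (exp 1)⁻¹ - 2) / (2 * M) := hdev
    _ ≤ exp 1 * 2 / (2 * M) := by
      gcongr
      linarith [exp_one_add_inv_le_four]
    _ = exp 1 / M := by field_simp
    _ ≤ exp 1 / √M := by
      gcongr
      exact (sqrt_le_left hM'.le).2 (le_self_pow₀ (Nat.one_le_cast.2 hM) two_ne_zero)
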